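/- For any may-must argumentation F = (A, R, f_Q), any subset A₁ ⊆ A, and any labelling λ, there exists a designation conservative sub-argumentation of F with respect to A₁ and λ. Concretely, the tuple (A₁, R ∩ (A₁×A₁), f'_Q) works, where for each a ∈ A₁ with f_Q(a) = ((n₁,n₂),(m₁,m₂)), letting k_out (resp. k_in) be the number of attackers of a outside A₁ labelled out (resp. in) by λ, one sets f'_Q(a) = ((max(0, n₁−k_out), max(0, n₂−k_out)), (max(0, m₁−k_in), max(0, m₂−k_in))). -/

import Mathlib

/-! Restricting to `A1` splits each count of attackers with a given label into the attackers
inside `A1` and the fixed number of those outside. Designation only compares these counts with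
the thresholds, and in `ℕ` truncated subtraction is exactly right for that: `n - k ≤ o ↔ n ≤ o + k`
and `o < n - k ↔ o + k < n`. So lowering every threshold by the external count preserves all
designations. -/

inductive Lab : Type
  | inn | out | undec
deriving DecidableEq

structure MMA (A : Type) [Fintype A] [DecidableEq A] where
  R : A → A → Prop
  decR : DecidableRel R
  n1 : A → ℕ
  n2 : A → ℕ
  m1 : A → ℕ
  m2 : A → ℕ
  hn : ∀ a, n1 a ≤ n2 a
  hm : ∀ a, m1 a ≤ m2 a

variable {A : Type} [Fintype A] [DecidableEq A]

/-- Number of attackers of `a` labelled `out` by `lam`. -/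
def outCnt (F : MMA A) (lam : A → Lab) (a : A) : ℕ :=
  letI := F.decR
  (Finset.univ.filter (fun b => F.R b a ∧ lam b = Lab.out)).card

/-- Number of attackers of `a` labelled `in` by `lam`. -/
def inCnt (F : MMA A) (lam : A → Lab) (a : A) : ℕ :=
  letI := F.decR
  (Finset.univ.filter (fun b => F.R b a ∧ lam b = Lab.inn)).card

/-- `lam` designates label `l` for argument `a` in `F`. -/
def designates (F : MMA A) (lam : A → Lab) (a : A) : Lab → Prop
  | Lab.inn => F.n1 a ≤ outCnt F lam a ∧ inCnt F lam a < F.m2 a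
  | Lab.out => F.m1 a ≤ inCnt F lam a ∧ outCnt F lam a < F.n2 a
  | Lab.undec =>
      (F.n2 a ≤ outCnt F lam a ∧ F.m2 a ≤ inCnt F lam a) ∨
      (F.n1 a ≤ outCnt F lam a ∧ outCnt F lam a < F.n2 a) ∨
      (F.m1 a ≤ inCnt F lam a ∧ inCnt F lam a < F.m2 a) ∨
      (outCnt F lam a < F.n1 a ∧ inCnt F lam a < F.m1 a)

/-- `a`'s label is proper under `lam`. -/
def proper (F : MMA A) (lam : A → Lab) (a : A) : Prop :=
  designates F lam a (lam a)

/-- Exact labelling: every argument's label is proper. -/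
def exactLab (F : MMA A) (lam : A → Lab) : Prop :=
  ∀ a, proper F lam a

/-- Pre-maximally proper labelling. -/
def preMaxProper (F : MMA A) (lam : A → Lab) : Prop :=
  ∀ a, proper F lam a ∨ lam a = Lab.undec

/-- Maximally proper labelling. -/
def maxProper (F : MMA A) (lam : A → Lab) : Prop :=
  preMaxProper F lam ∧
    ∀ lam', preMaxProper F lam' → ∀ a, proper F lam' a → proper F lam a

/-- The order `⪯` on labellings. -/
def labLE (l1 l2 : A → Lab) : Prop :=
  ∀ a, (l1 a = Lab.inn → l2 a = Lab.inn) ∧ (l1 a = Lab.out → l2 a = Lab.out)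

/-- Number of attackers of `a` lying outside `A1` that `lam` labels `out`. -/
def extOut (F : MMA A) (A1 : Finset A) (lam : A → Lab) (a : A) : ℕ :=
  letI := F.decR
  (Finset.univ.filter (fun b => b ∉ A1 ∧ F.R b a ∧ lam b = Lab.out)).card

/-- Number of attackers of `a` lying outside `A1` that `lam` labels `in`. -/
def extIn (F : MMA A) (A1 : Finset A) (lam : A → Lab) (a : A) : ℕ :=
  letI := F.decR
  (Finset.univ.filter (fun b => b ∉ A1 ∧ F.R b a ∧ lam b = Lab.inn)).card

open Finset

theorem Finset.card_filter_univ_eq_subtype_add_compl (s : Finset A) (P : A → Prop)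
    [DecidablePred P] :
    #{b | P b} = #{b : s | P b.1} + #{b | b ∉ s ∧ P b} := by
  have hsub : #{b : s | P b.1} = #(s.filter P) := by
    rw [← card_map (Function.Embedding.subtype _)]
    congr 1
    ext b
    simp [and_comm]
  rw [hsub, ← card_filter_add_card_filter_not (s := univ.filter P) (p := (· ∈ s))]
  simp only [filter_filter]
  congr 2 <;> ext b <;> simp only [mem_filter, mem_univ, true_and] <;> tauto

def extendLab (A1 : Finset A) (lam : A → Lab) (lamx : {x // x ∈ A1} → Lab) : A → Lab :=
  fun b => if h : b ∈ A1 then lamx ⟨b, h⟩ else lam b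

theorem card_filter_extendLab (A1 : Finset A) (lam : A → Lab) (lamx : {x // x ∈ A1} → Lab)
    (P : A → Prop) [DecidablePred P] (L : Lab) :
    #{b | P b ∧ extendLab A1 lam lamx b = L} =
      #{b : A1 | P b ∧ lamx b = L} + #{b | b ∉ A1 ∧ P b ∧ lam b = L} := by
  rw [card_filter_univ_eq_subtype_add_compl A1]
  congr 1
  · congr 1; ext b; simp [extendLab]
  · congr 1; ext b
    simp only [mem_filter, mem_univ, true_and]
    by_cases hb : b ∈ A1 <;> simp [extendLab, hb]

namespace MMA

def restrict (F : MMA A) (A1 : Finset A) (lam : A → Lab) : MMA {x // x ∈ A1} where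
  R b c := F.R b c
  decR b c := F.decR b c
  n1 a := F.n1 a - extOut F A1 lam a
  n2 a := F.n2 a - extOut F A1 lam a
  m1 a := F.m1 a - extIn F A1 lam a
  m2 a := F.m2 a - extIn F A1 lam a
  hn a := Nat.sub_le_sub_right (F.hn a) _
  hm a := Nat.sub_le_sub_right (F.hm a) _

variable (F : MMA A) (A1 : Finset A) (lam : A → Lab) (lamx : {x // x ∈ A1} → Lab)
  (a : {x // x ∈ A1})

theorem outCnt_extendLab :
    outCnt F (extendLab A1 lam lamx) a = outCnt (F.restrict A1 lam) lamx a + extOut F A1 lam a :=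
  letI := F.decR
  card_filter_extendLab A1 lam lamx (F.R · a) Lab.out

theorem inCnt_extendLab :
    inCnt F (extendLab A1 lam lamx) a = inCnt (F.restrict A1 lam) lamx a + extIn F A1 lam a :=
  letI := F.decR
  card_filter_extendLab A1 lam lamx (F.R · a) Lab.inn

theorem designates_restrict_iff (l : Lab) :
    designates (F.restrict A1 lam) lamx a l ↔ designates F (extendLab A1 lam lamx) a l := by
  cases l <;>
    simp only [designates, outCnt_extendLab, inCnt_extendLab, restrict] <;> omega

end MMA

theorem stmt6 (F : MMA A) (A1 : Finset A) (lam : A → Lab) :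
    ∃ F' : MMA {x // x ∈ A1},
      (∀ b c : {x // x ∈ A1}, F'.R b c ↔ F.R b.1 c.1) ∧
      (∀ a : {x // x ∈ A1},
        F'.n1 a = F.n1 a.1 - extOut F A1 lam a.1 ∧
        F'.n2 a = F.n2 a.1 - extOut F A1 lam a.1 ∧
        F'.m1 a = F.m1 a.1 - extIn F A1 lam a.1 ∧
        F'.m2 a = F.m2 a.1 - extIn F A1 lam a.1) ∧
      (∀ (a : {x // x ∈ A1}) (lamx : {x // x ∈ A1} → Lab) (l : Lab),
        designates F' lamx a l ↔
          designates F (fun b => if h : b ∈ A1 then lamx ⟨b, h⟩ else lam b) a.1 l) :=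
  ⟨F.restrict A1 lam, fun _ _ => Iff.rfl, fun _ => ⟨rfl, rfl, rfl, rfl⟩,
    fun a lamx l => F.designates_restrict_iff A1 lam lamx a l⟩
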